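/- arXiv:2604.25761 — 2 statements merged into one kernel-verified Lean document; each statement's English description precedes it below -/
import Mathlib

section
/- Let (T,Σ,ν) be a superatomless probability space and let μ be a probability measure on (T,Σ) that is absolutely continuous with respect to ν. Then μ is superatomless. -/
/-!
Write `μ = f • ν` with a finite density `f`. Multiplication by `f` is an isometry
`L₁(μ) → L₁(ν)`, and its image of `L₁(A, μ)` contains `L₁(A ∩ {f ≠ 0}, ν)`: a preimage of `h`
is `h / f`. If `μ A > 0` then `ν (A ∩ {f ≠ 0}) > 0`, so `L₁(A ∩ {f ≠ 0}, ν)` is non-separable,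
and so is `L₁(A, μ)`, since separability passes to continuous images and to subsets.
-/

open MeasureTheory Set
open scoped ENNReal NNReal

/-- A measure space is superatomless if the subspace `L₁(A,ν)` of `L₁(ν)` of elements
vanishing outside `A` is non-separable for every measurable `A` with `ν A > 0`. -/
def Superatomless {T : Type*} [MeasurableSpace T] (ν : Measure T) : Prop :=
  ∀ A : Set T, MeasurableSet A → 0 < ν A →
    ¬ TopologicalSpace.IsSeparable {f : Lp ℝ 1 ν | ∀ᵐ t ∂ν, t ∉ A → f t = 0}

namespace MeasureTheory

variable {T : Type*} [MeasurableSpace T]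

theorem Measure.exists_measurable_nnreal_withDensity_eq {μ ν : Measure T} [SigmaFinite μ]
    [SigmaFinite ν] (h : μ ≪ ν) :
    ∃ f : T → ℝ≥0, Measurable f ∧ ν.withDensity (fun t => f t) = μ :=
  ⟨fun t => (μ.rnDeriv ν t).toNNReal, (μ.measurable_rnDeriv ν).ennreal_toNNReal,
    (withDensity_congr_ae (coe_toNNReal_ae_eq (μ.rnDeriv_lt_top ν))).trans
      (μ.withDensity_rnDeriv_eq ν h)⟩

theorem exists_withDensitySMulLI_eq_of_ae_eq_zero {E : Type*} [NormedAddCommGroup E]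
    [NormedSpace ℝ E] {ν : Measure T} {f : T → ℝ≥0} (hf : Measurable f) {A : Set T}
    (h : Lp E 1 ν) (hh : ∀ᵐ t ∂ν, t ∉ A ∩ {t | f t ≠ 0} → h t = 0) :
    ∃ u : Lp E 1 (ν.withDensity fun t => f t),
      (∀ᵐ t ∂(ν.withDensity fun t => f t), t ∉ A → u t = 0) ∧ withDensitySMulLI ν hf u = h := by
  set F : T → E := fun t => (f t)⁻¹ • h t
  have hF_smul : (fun t => f t • F t) =ᵐ[ν] h := by
    filter_upwards [hh] with t ht
    by_cases h0 : f t = 0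
    · simp [F, h0, ht]
    · exact smul_inv_smul₀ h0 _
  have hF : Integrable F (ν.withDensity fun t => f t) :=
    (integrable_withDensity_iff_integrable_smul hf).2
      ((L1.integrable_coeFn h).congr hF_smul.symm)
  refine ⟨hF.toL1 F, ?_, ?_⟩
  · have hF_vanish : ∀ᵐ t ∂ν, t ∉ A → F t = 0 := by
      filter_upwards [hh] with t ht htA
      simp [F, ht fun htB => htA htB.1]
    filter_upwards [withDensity_absolutelyContinuous ν _ hF_vanish, hF.coeFn_toL1]
      with t ht htu htA
    rw [htu, ht htA]
  · refine Lp.ext ?_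
    filter_upwards [(memL1_smul_of_L1_withDensity hf (hF.toL1 F)).coeFn_toLp,
      (ae_withDensity_iff hf.coe_nnreal_ennreal).1 hF.coeFn_toL1, hF_smul] with t hΦ hu hFt
    rw [withDensitySMulLI_apply, hΦ, ← hFt]
    by_cases h0 : f t = 0
    · simp [h0]
    · rw [hu (ENNReal.coe_ne_zero.2 h0)]

theorem Superatomless.withDensity {ν : Measure T} (hν : Superatomless ν) {f : T → ℝ≥0}
    (hf : Measurable f) : Superatomless (ν.withDensity fun t => f t) := by
  intro A hA hpos hsep
  have hB : MeasurableSet (A ∩ {t | f t ≠ 0}) := hA.inter (hf (measurableSet_singleton 0)).compl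
  have hνB : 0 < ν (A ∩ {t | f t ≠ 0}) := by
    refine pos_iff_ne_zero.2 fun h0 =>
      hpos.ne' ((withDensity_apply_eq_zero hf.coe_nnreal_ennreal).2 ?_)
    simpa only [ne_eq, ENNReal.coe_eq_zero, inter_comm] using h0
  refine hν _ hB hνB ((hsep.image (withDensitySMulLI ν hf).continuous).mono ?_)
  exact fun h hh => exists_withDensitySMulLI_eq_of_ae_eq_zero hf h hh

end MeasureTheory

/-- A probability measure absolutely continuous with respect to a superatomless
probability measure is superatomless. -/
theorem stmt5 {T : Type*} [MeasurableSpace T]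
    (ν μ : Measure T) [IsProbabilityMeasure ν] [IsProbabilityMeasure μ]
    (hsa : Superatomless ν) (hac : μ ≪ ν) :
    Superatomless μ := by
  obtain ⟨f, hf, rfl⟩ := Measure.exists_measurable_nnreal_withDensity_eq hac
  exact hsa.withDensity hf
end

section
/- Let μ be a distributional economy such that μ(𝒫_mo × E) = 1 and ∫π_E dμ ≫ 0, and let ν be a core reallocation for μ. Then there exists a price vector p ∈ ℝ^l with p ≫ 0 such that ν({(≻,e,x) : p·x = p·e}) = 1. -/
open MeasureTheory Set

noncomputable section

/-- The consumption set `X = E = ℝ^l₊`, the nonnegative orthant of `ℝ^l`. -/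
abbrev Cons (l : ℕ) := {x : Fin l → ℝ // ∀ i, 0 ≤ x i}

/-- The space `𝒫` of irreflexive binary relations on `X` with (relatively) open graph. -/
structure PrefRel (l : ℕ) where
  rel : Cons l → Cons l → Prop
  irrefl : Irreflexive rel
  openGraph : IsOpen {p : Cons l × Cons l | rel p.1 p.2}

/-- The coarsest topology on `𝒫` making `{(≻,x,y) | x ≻ y}` open in `𝒫 × X × X`. -/
instance (l : ℕ) : TopologicalSpace (PrefRel l) :=
  sSup {t : TopologicalSpace (PrefRel l) |
    @IsOpen (PrefRel l × Cons l × Cons l)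
      (@instTopologicalSpaceProd (PrefRel l) (Cons l × Cons l) t inferInstance)
      {p | p.1.rel p.2.1 p.2.2}}

/-- `𝒫` carries the Borel σ-algebra of this topology. -/
instance (l : ℕ) : MeasurableSpace (PrefRel l) := borel (PrefRel l)

instance (l : ℕ) : BorelSpace (PrefRel l) := ⟨rfl⟩

/-- Strictly monotone preferences (membership in `𝒫_mo`): `x > y` coordinatewise
(with `x ≠ y`) implies `x ≻ y`. -/
def IsMono {l : ℕ} (r : PrefRel l) : Prop :=
  ∀ x y : Cons l, (∀ i, y.1 i ≤ x.1 i) → x ≠ y → r.rel x y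

/-- `τ` is a reallocation for the distributional economy `μ`: a Borel probability measure
on `𝒫 × E × X` whose `𝒫 × E`-marginal is `μ` and whose `𝒫 × X`-marginal is a
distributional allocation for `μ`. -/
def Realloc {l : ℕ} (μ : Measure (PrefRel l × Cons l))
    (τ : Measure (PrefRel l × Cons l × Cons l)) : Prop :=
  IsProbabilityMeasure τ ∧
    τ.map (fun q => (q.1, q.2.1)) = μ ∧
    Integrable (fun q : PrefRel l × Cons l × Cons l => (q.2.2).1) τ ∧
    ∫ q : PrefRel l × Cons l × Cons l, (q.2.2).1 ∂τ =
      ∫ p : PrefRel l × Cons l, (p.2).1 ∂μ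

/-- `τ` is a Walrasian reallocation: for some price vector `p`, `τ`-almost every
`(≻, e, x)` satisfies `p · x ≤ p · e` and `x' ≻ x → p · x' > p · e`. -/
def Walrasian {l : ℕ} (τ : Measure (PrefRel l × Cons l × Cons l)) : Prop :=
  ∃ p : Fin l → ℝ,
    τ {q : PrefRel l × Cons l × Cons l |
      (∑ i, p i * (q.2.2).1 i) ≤ (∑ i, p i * (q.2.1).1 i) ∧
      ∀ x' : Cons l, q.1.rel x' q.2.2 → (∑ i, p i * (q.2.1).1 i) < ∑ i, p i * x'.1 i} = 1

/-- `τ` is a core reallocation: there is no (nonzero) Borel measure `κ` on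
`𝒫 × E × X × X'` under which `{(≻,e,x,x') | ¬ x' ≻ x}` is null, whose `𝒫 × E × X`-marginal
is setwise smaller than `τ`, and with `∫ π_{X'} dκ = ∫ π_E dκ`. -/
def CoreRealloc {l : ℕ} (τ : Measure (PrefRel l × Cons l × Cons l)) : Prop :=
  ¬ ∃ κ : Measure (PrefRel l × Cons l × Cons l × Cons l),
      κ ≠ 0 ∧
      κ {q : PrefRel l × Cons l × Cons l × Cons l | ¬ q.1.rel q.2.2.2 q.2.2.1} = 0 ∧
      (∀ A : Set (PrefRel l × Cons l × Cons l), MeasurableSet A →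
        κ.map (fun q => (q.1, q.2.1, q.2.2.1)) A ≤ τ A) ∧
      Integrable (fun q : PrefRel l × Cons l × Cons l × Cons l => (q.2.2.2).1) κ ∧
      Integrable (fun q : PrefRel l × Cons l × Cons l × Cons l => (q.2.1).1) κ ∧
      ∫ q : PrefRel l × Cons l × Cons l × Cons l, (q.2.2.2).1 ∂κ =
        ∫ q : PrefRel l × Cons l × Cons l × Cons l, (q.2.1).1 ∂κ


/-!
A coalition of a reallocation `ν` is a measure `ρ ≤ ν`, with net trade `∫ (e - x) dρ`. These
net trades form a convex set `K`, symmetric because `∫ (e - x) dν = 0` makes the complementary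
coalition `ν - ρ` trade `-∫ (e - x) dρ`. A coalition with a nonzero net trade `v ≥ 0` could hand
every member `x + v / ρ(univ)`, strictly preferred under monotone preferences, and would block
`ν`; so `K` meets the nonnegative orthant only in `0`. Separating the span of `K` from the standard
simplex yields `p ≫ 0` orthogonal to `K`, and testing this on the coalitions `ν.restrict s` gives
`p · (e - x) = 0` almost everywhere.
-/

lemma Convex.exists_nonneg_smul_of_mem_span {E : Type*} [AddCommGroup E] [Module ℝ E]
    {K : Set E} (hK : Convex ℝ K) (h0 : 0 ∈ K) (hneg : ∀ k ∈ K, -k ∈ K) {v : E}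
    (hv : v ∈ Submodule.span ℝ K) : ∃ t : ℝ, 0 ≤ t ∧ ∃ k ∈ K, v = t • k := by
  induction hv using Submodule.span_induction with
  | mem k hk => exact ⟨1, zero_le_one, k, hk, (one_smul ℝ k).symm⟩
  | zero => exact ⟨0, le_rfl, 0, h0, (smul_zero 0).symm⟩
  | add _ _ _ _ h₁ h₂ =>
    obtain ⟨t₁, ht₁, k₁, hk₁, rfl⟩ := h₁
    obtain ⟨t₂, ht₂, k₂, hk₂, rfl⟩ := h₂
    rcases (add_nonneg ht₁ ht₂).eq_or_lt with hs | hs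
    · obtain ⟨rfl, rfl⟩ : t₁ = 0 ∧ t₂ = 0 := ⟨by linarith, by linarith⟩
      exact ⟨0, le_rfl, 0, h0, by simp⟩
    refine ⟨t₁ + t₂, hs.le, (t₁ / (t₁ + t₂)) • k₁ + (t₂ / (t₁ + t₂)) • k₂,
      hK hk₁ hk₂ (by positivity) (by positivity) (by field_simp), ?_⟩
    rw [smul_add, smul_smul, smul_smul, mul_div_cancel₀ _ hs.ne', mul_div_cancel₀ _ hs.ne']
  | smul c _ _ h =>
    obtain ⟨t, ht, k, hk, rfl⟩ := h
    rcases le_total 0 c with hc | hc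
    · exact ⟨c * t, mul_nonneg hc ht, k, hk, smul_smul c t k⟩
    · refine ⟨-c * t, mul_nonneg (neg_nonneg.mpr hc) ht, -k, hneg k hk, ?_⟩
      rw [smul_neg, ← neg_smul, neg_mul, neg_neg, smul_smul]

lemma Submodule.exists_pos_dotProduct_eq_zero {ι : Type*} [Fintype ι] [DecidableEq ι]
    (V : Submodule ℝ (ι → ℝ)) (hV : ∀ v ∈ V, 0 ≤ v → v = 0) :
    ∃ p : ι → ℝ, (∀ i, 0 < p i) ∧ ∀ v ∈ V, p ⬝ᵥ v = 0 := by
  have hdisj : Disjoint (V : Set (ι → ℝ)) (stdSimplex ℝ ι) := by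
    refine disjoint_left.mpr fun v hv hvΔ => ?_
    have := hvΔ.2
    rw [hV v hv hvΔ.1] at this
    simp at this
  obtain ⟨F, s, t, hFV, hst, hFΔ⟩ := geometric_hahn_banach_closed_compact V.convex
    V.closed_of_finiteDimensional (convex_stdSimplex ℝ ι) (isCompact_stdSimplex ℝ ι) hdisj
  -- a linear functional bounded above on a subspace vanishes on it
  have hF : ∀ v ∈ V, F v = 0 := by
    intro v hv
    by_contra hne
    have := hFV (((|s| + 1) / F v) • v) (V.smul_mem _ hv)
    rw [map_smul, smul_eq_mul, div_mul_cancel₀ _ hne] at this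
    linarith [le_abs_self s]
  have hs : 0 < s := by simpa using hFV 0 V.zero_mem
  refine ⟨(dotProductEquiv ℝ ι).symm F.toLinearMap, fun i => ?_, fun v hv => ?_⟩
  · exact hs.trans (hst.trans (hFΔ _ (single_mem_stdSimplex ℝ i)))
  · rw [← hF v hv]
    exact LinearMap.congr_fun ((dotProductEquiv ℝ ι).apply_symm_apply F.toLinearMap) v

lemma Convex.exists_pos_dotProduct_eq_zero {ι : Type*} [Fintype ι] [DecidableEq ι]
    {K : Set (ι → ℝ)} (hK : Convex ℝ K) (h0 : 0 ∈ K) (hneg : ∀ k ∈ K, -k ∈ K)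
    (hpos : ∀ k ∈ K, 0 ≤ k → k = 0) :
    ∃ p : ι → ℝ, (∀ i, 0 < p i) ∧ ∀ k ∈ K, p ⬝ᵥ k = 0 := by
  obtain ⟨p, hp, hV⟩ := (Submodule.span ℝ K).exists_pos_dotProduct_eq_zero fun v hv hv0 => by
    obtain ⟨t, ht, k, hk, rfl⟩ := hK.exists_nonneg_smul_of_mem_span h0 hneg hv
    rcases ht.eq_or_lt with rfl | ht
    · exact zero_smul ℝ k
    · rw [hpos k hk (nonneg_of_smul_nonneg_of_pos_left hv0 ht), smul_zero]
  exact ⟨p, hp, fun k hk => hV k (Submodule.subset_span hk)⟩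

section IntegralsBelow

variable {α E : Type*} [MeasurableSpace α] [NormedAddCommGroup E] [NormedSpace ℝ E]

def integralsBelow (ν : Measure α) (φ : α → E) : Set E :=
  {v | ∃ ρ ≤ ν, ∫ a, φ a ∂ρ = v}

variable {ν : Measure α} {φ : α → E}

lemma zero_mem_integralsBelow : (0 : E) ∈ integralsBelow ν φ :=
  ⟨0, Measure.zero_le ν, integral_zero_measure φ⟩

lemma convex_integralsBelow (hφ : Integrable φ ν) : Convex ℝ (integralsBelow ν φ) := by
  rintro _ ⟨ρ₁, hρ₁, rfl⟩ _ ⟨ρ₂, hρ₂, rfl⟩ a b ha hb hab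
  refine ⟨ENNReal.ofReal a • ρ₁ + ENNReal.ofReal b • ρ₂, ?_, ?_⟩
  · calc ENNReal.ofReal a • ρ₁ + ENNReal.ofReal b • ρ₂
        ≤ ENNReal.ofReal a • ν + ENNReal.ofReal b • ν := by gcongr
      _ = ν := by rw [← add_smul, ← ENNReal.ofReal_add ha hb, hab, ENNReal.ofReal_one, one_smul]
  · rw [integral_add_measure ((hφ.mono_measure hρ₁).smul_measure ENNReal.ofReal_ne_top)
      ((hφ.mono_measure hρ₂).smul_measure ENNReal.ofReal_ne_top), integral_smul_measure,
      integral_smul_measure, ENNReal.toReal_ofReal ha, ENNReal.toReal_ofReal hb]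

lemma neg_mem_integralsBelow [IsFiniteMeasure ν] (hφ : Integrable φ ν) (hφ0 : ∫ a, φ a ∂ν = 0)
    {v : E} (hv : v ∈ integralsBelow ν φ) : -v ∈ integralsBelow ν φ := by
  obtain ⟨ρ, hρ, rfl⟩ := hv
  have : IsFiniteMeasure ρ := isFiniteMeasure_of_le ν hρ
  refine ⟨ν - ρ, Measure.sub_le, eq_neg_of_add_eq_zero_left ?_⟩
  rw [← integral_add_measure (hφ.mono_measure Measure.sub_le) (hφ.mono_measure hρ),
    Measure.sub_add_cancel_of_le hρ, hφ0]

end IntegralsBelow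

namespace MeasureTheory

variable {α ι : Type*} [MeasurableSpace α] {μ : Measure α} [Fintype ι] [DecidableEq ι]
  (p : ι → ℝ) {f : α → ι → ℝ}

lemma Integrable.const_dotProduct (hf : Integrable f μ) : Integrable (fun a => p ⬝ᵥ f a) μ :=
  (LinearMap.toContinuousLinearMap (dotProductEquiv ℝ ι p)).integrable_comp hf

lemma integral_const_dotProduct (hf : Integrable f μ) :
    ∫ a, p ⬝ᵥ f a ∂μ = p ⬝ᵥ ∫ a, f a ∂μ :=
  (LinearMap.toContinuousLinearMap (dotProductEquiv ℝ ι p)).integral_comp_comm hf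

end MeasureTheory

instance (l : ℕ) : BorelSpace (Cons l) := Subtype.borelSpace _

instance (l : ℕ) : LocallyCompactSpace (Cons l) :=
  (isClosed_Ici (a := (0 : Fin l → ℝ))).isClosedEmbedding_subtypeVal.locallyCompactSpace

namespace PrefRel

variable {l : ℕ}

lemma isOpen_setOf_subset_graph {K : Set (Cons l × Cons l)} (hK : IsCompact K) :
    IsOpen {r : PrefRel l | ∀ z ∈ K, r.rel z.1 z.2} := by
  refine isOpen_sSup_iff.mpr fun t ht => ?_
  refine @isOpen_iff_forall_mem_open _ t _ |>.mpr fun r hr => ?_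
  have hsub : {r} ×ˢ K ⊆ {p : PrefRel l × Cons l × Cons l | p.1.rel p.2.1 p.2.2} := by
    rintro ⟨r', z⟩ ⟨rfl, hz⟩
    exact hr z hz
  obtain ⟨u, v, hu, -, hru, hKv, huv⟩ :=
    @generalized_tube_lemma _ _ t _ _ (@isCompact_singleton _ t r) _ hK _ ht hsub
  exact ⟨u, fun r' hr' z hz => huv (mk_mem_prod hr' (hKv hz)), hu, hru rfl⟩

lemma isOpen_setOf_rel (l : ℕ) :
    IsOpen {p : PrefRel l × Cons l × Cons l | p.1.rel p.2.1 p.2.2} := by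
  refine isOpen_iff_forall_mem_open.mpr fun ⟨r, z⟩ hz => ?_
  obtain ⟨K, hK, hzK, hKr⟩ := exists_compact_subset r.openGraph hz
  exact ⟨{r' | ∀ w ∈ K, r'.rel w.1 w.2} ×ˢ interior K,
    fun p hp => hp.1 p.2 (interior_subset hp.2),
    (isOpen_setOf_subset_graph hK).prod isOpen_interior, fun w hw => hKr hw, hzK⟩

lemma measurableSet_setOf_subset_graph {K : Set (Cons l × Cons l)} (hK : IsSigmaCompact K) :
    MeasurableSet {r : PrefRel l | ∀ z ∈ K, r.rel z.1 z.2} := by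
  obtain ⟨C, hC, rfl⟩ := hK
  have : {r : PrefRel l | ∀ z ∈ ⋃ n, C n, r.rel z.1 z.2} =
      ⋂ n, {r | ∀ z ∈ C n, r.rel z.1 z.2} := by
    ext r
    simp only [mem_iUnion, mem_iInter, mem_ofPred_eq, forall_exists_index]
    exact forall_comm
  exact this ▸ .iInter fun n => (isOpen_setOf_subset_graph (hC n)).measurableSet

lemma isSigmaCompact_setOf_gt (l : ℕ) :
    IsSigmaCompact {z : Cons l × Cons l | (∀ i, z.2.1 i ≤ z.1.1 i) ∧ z.1 ≠ z.2} := by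
  have hclosed : IsClosed {z : Cons l × Cons l | ∀ i, z.2.1 i ≤ z.1.1 i} :=
    isClosed_le (continuous_subtype_val.comp continuous_snd)
      (continuous_subtype_val.comp continuous_fst)
  have := ((hclosed.isLocallyClosed).inter (isOpen_ne_fun continuous_fst
    continuous_snd).isLocallyClosed).locallyCompactSpace
  exact isSigmaCompact_iff_sigmaCompactSpace.mpr
    (@sigmaCompactSpace_of_locallyCompact_secondCountable _ _ this _)

lemma measurableSet_setOf_isMono (l : ℕ) : MeasurableSet {r : PrefRel l | IsMono r} := by
  convert measurableSet_setOf_subset_graph (isSigmaCompact_setOf_gt l) using 1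
  ext r
  exact ⟨fun hr z hz => hr z.1 z.2 hz.1 hz.2, fun hr x y hle hne => hr (x, y) ⟨hle, hne⟩⟩

end PrefRel

section Blocking

variable {l : ℕ}

lemma not_coreRealloc_of_improving_coalition {τ ρ : Measure (PrefRel l × Cons l × Cons l)}
    [IsFiniteMeasure ρ] (hρτ : ρ ≤ τ) (hρ0 : ρ ≠ 0) (hmono : ρ {q | ¬ IsMono q.1} = 0)
    (he : Integrable (fun q => q.2.1.1) ρ) (hx : Integrable (fun q => q.2.2.1) ρ)
    {w : Fin l → ℝ} (hw : 0 ≤ w) (hw0 : w ≠ 0)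
    (hbudget : ∫ q, q.2.2.1 ∂ρ + ρ.real univ • w = ∫ q, q.2.1.1 ∂ρ) :
    ¬ CoreRealloc τ := by
  let f : PrefRel l × Cons l × Cons l → PrefRel l × Cons l × Cons l × Cons l :=
    fun q => (q.1, q.2.1, q.2.2, ⟨q.2.2.1 + w, fun i => add_nonneg (q.2.2.2 i) (hw i)⟩)
  have hf : Measurable f := by
    refine measurable_fst.prodMk ((measurable_fst.comp measurable_snd).prodMk
      ((measurable_snd.comp measurable_snd).prodMk (Measurable.subtype_mk ?_)))
    fun_prop
  have hx' : Measurable fun q : PrefRel l × Cons l × Cons l × Cons l => q.2.2.2.1 := by fun_prop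
  have he' : Measurable fun q : PrefRel l × Cons l × Cons l × Cons l => q.2.1.1 := by fun_prop
  refine not_not_intro ⟨ρ.map f, ?_, ?_, fun A hA => ?_, ?_, ?_, ?_⟩
  · simpa [Measure.map_eq_zero_iff hf.aemeasurable] using hρ0
  · have hS : MeasurableSet {q : PrefRel l × Cons l × Cons l × Cons l |
        ¬ q.1.rel q.2.2.2 q.2.2.1} :=
      ((PrefRel.isOpen_setOf_rel l).measurableSet.preimage (by fun_prop :
        Measurable fun q : PrefRel l × Cons l × Cons l × Cons l => (q.1, q.2.2.2, q.2.2.1))).compl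
    rw [Measure.map_apply hf hS]
    refine measure_mono_null (fun q (hq : ¬ _) (hq_mono : IsMono q.1) => hq ?_) hmono
    exact hq_mono _ _ (fun i => le_add_of_nonneg_right (hw i))
      fun h => hw0 (add_eq_left.mp (congrArg Subtype.val h))
  · rw [Measure.map_map (by fun_prop) hf, show _ ∘ f = id from rfl, Measure.map_id]
    exact hρτ A
  · exact (integrable_map_measure hx'.aestronglyMeasurable hf.aemeasurable).mpr
      (hx.add (integrable_const w))
  · exact (integrable_map_measure he'.aestronglyMeasurable hf.aemeasurable).mpr he
  · rw [integral_map hf.aemeasurable hx'.aestronglyMeasurable,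
      integral_map hf.aemeasurable he'.aestronglyMeasurable, ← hbudget, ← integral_const,
      ← integral_add hx (integrable_const w)]

lemma CoreRealloc.eq_zero_of_mem_integralsBelow_of_nonneg
    {τ : Measure (PrefRel l × Cons l × Cons l)} [IsFiniteMeasure τ] (hcore : CoreRealloc τ)
    (hmono : τ {q | ¬ IsMono q.1} = 0)
    (he : Integrable (fun q => q.2.1.1) τ) (hx : Integrable (fun q => q.2.2.1) τ)
    {v : Fin l → ℝ} (hv : v ∈ integralsBelow τ fun q => q.2.1.1 - q.2.2.1) (hv0 : 0 ≤ v) :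
    v = 0 := by
  obtain ⟨ρ, hρτ, rfl⟩ := hv
  by_contra hne
  have : IsFiniteMeasure ρ := isFiniteMeasure_of_le τ hρτ
  have hρ0 : ρ ≠ 0 := by
    rintro rfl
    exact hne (integral_zero_measure _)
  have hc : 0 < ρ.real univ := by
    simpa [measureReal_def, ENNReal.toReal_pos_iff, pos_iff_ne_zero] using hρ0
  refine absurd hcore (not_coreRealloc_of_improving_coalition hρτ hρ0
    (Measure.absolutelyContinuous_of_le hρτ hmono) (he.mono_measure hρτ) (hx.mono_measure hρτ)
    (smul_nonneg (inv_nonneg.mpr hc.le) hv0) (smul_ne_zero (inv_ne_zero hc.ne') hne) ?_)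
  rw [smul_inv_smul₀ hc.ne', integral_sub (he.mono_measure hρτ) (hx.mono_measure hρτ),
    add_sub_cancel]

end Blocking

theorem stmt17_general {l : ℕ}
    (μ : Measure (PrefRel l × Cons l)) [IsProbabilityMeasure μ]
    (hμint : Integrable (fun p : PrefRel l × Cons l => (p.2).1) μ)
    (hmo : μ {p : PrefRel l × Cons l | IsMono p.1} = 1)
    (ν : Measure (PrefRel l × Cons l × Cons l))
    (hν : Realloc μ ν) (hcore : CoreRealloc ν) :
    ∃ p : Fin l → ℝ, (∀ i, 0 < p i) ∧
      ν {q : PrefRel l × Cons l × Cons l |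
        (∑ i, p i * (q.2.2).1 i) = ∑ i, p i * (q.2.1).1 i} = 1 := by
  obtain ⟨_, hmarg, hx, hbal⟩ := hν
  subst hmarg
  have hm : Measurable fun q : PrefRel l × Cons l × Cons l => (q.1, q.2.1) := by fun_prop
  have he : Integrable (fun q : PrefRel l × Cons l × Cons l => q.2.1.1) ν :=
    (integrable_map_measure hμint.1 hm.aemeasurable).mp hμint
  have hφ : Integrable (fun q : PrefRel l × Cons l × Cons l => q.2.1.1 - q.2.2.1) ν := he.sub hx
  have hφ0 : ∫ q, q.2.1.1 - q.2.2.1 ∂ν = 0 := by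
    rw [integral_sub he hx, hbal, integral_map hm.aemeasurable hμint.1, sub_self]
  have hmono : ν {q | ¬ IsMono q.1} = 0 :=
    nonpos_iff_eq_zero.mp ((Measure.le_map_apply hm.aemeasurable {p | ¬ IsMono p.1}).trans_eq
      ((prob_compl_eq_zero_iff ((PrefRel.measurableSet_setOf_isMono l).preimage
        measurable_fst)).mpr hmo))
  obtain ⟨p, hp, hpK⟩ := (convex_integralsBelow hφ).exists_pos_dotProduct_eq_zero
    zero_mem_integralsBelow (fun _ => neg_mem_integralsBelow hφ hφ0)
    fun _ => hcore.eq_zero_of_mem_integralsBelow_of_nonneg hmono he hx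
  have hae : (fun q => p ⬝ᵥ (q.2.1.1 - q.2.2.1)) =ᵐ[ν] 0 :=
    (hφ.const_dotProduct p).ae_eq_zero_of_forall_setIntegral_eq_zero fun s _ _ => by
      rw [integral_const_dotProduct p hφ.integrableOn]
      exact hpK _ ⟨ν.restrict s, Measure.restrict_le_self, rfl⟩
  refine ⟨p, hp, ?_⟩
  rw [measure_congr (ae_eq_univ.mpr _), measure_univ]
  filter_upwards [hae] with q hq
  exact (sub_eq_zero.mp ((dotProduct_sub p _ _).symm.trans hq)).symm

/-- For a distributional economy concentrated on strictly monotone preferences with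
strictly positive aggregate endowment, every core reallocation `ν` admits a strictly
positive price vector `p ≫ 0` with `ν({(≻,e,x) | p·x = p·e}) = 1`. -/
theorem stmt17 {l : ℕ}
    (μ : Measure (PrefRel l × Cons l)) [IsProbabilityMeasure μ]
    (hμint : Integrable (fun p : PrefRel l × Cons l => (p.2).1) μ)
    (hmo : μ {p : PrefRel l × Cons l | IsMono p.1} = 1)
    (hpos : ∀ i, 0 < (∫ p : PrefRel l × Cons l, (p.2).1 ∂μ) i)
    (ν : Measure (PrefRel l × Cons l × Cons l))
    (hν : Realloc μ ν) (hcore : CoreRealloc ν) :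
    ∃ p : Fin l → ℝ, (∀ i, 0 < p i) ∧
      ν {q : PrefRel l × Cons l × Cons l |
        (∑ i, p i * (q.2.2).1 i) = ∑ i, p i * (q.2.1).1 i} = 1 :=
  stmt17_general μ hμint hmo ν hν hcore

end
end
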